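/- For the group SU(1,1), with F_n(γ) defined for γ ∈ P⁺K_ℂN_ℂ by F_n(γ) = ψ_v(n_ℂ(γ)⁻¹) χ_n(k_ℂ(γ)⁻¹) where ψ_v(n_s) = e^{-ivs} and χ_n(k_θ) = e^{-inθ/2}, one has the modulus formula |F_n(k_θ a_t n)|² = e^{-2nt} e^{v(1 - e^{-2t})} for all θ, t ∈ ℝ and n ∈ N. Consequently, using the invariant measure ∫_{G/N} f dμ = (1/4π)∫₀^{4π}∫_ℝ f(k_θ a_t N) e^{2t} dt dθ, the function F_n lies in L²(G/N, ψ_v) if and only if n > 1 and v > 0. -/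

import Mathlib

open Matrix MeasureTheory

noncomputable def kθmat (θ : ℝ) : Matrix (Fin 2) (Fin 2) ℂ :=
  !![Complex.exp (Complex.I * θ / 2), 0; 0, Complex.exp (-(Complex.I * θ / 2))]

noncomputable def amat (t : ℝ) : Matrix (Fin 2) (Fin 2) ℂ :=
  !![(Real.cosh t : ℂ), (Real.sinh t : ℂ); (Real.sinh t : ℂ), (Real.cosh t : ℂ)]

noncomputable def nmat (s : ℂ) : Matrix (Fin 2) (Fin 2) ℂ :=
  !![1 + Complex.I * s, -(Complex.I * s); Complex.I * s, 1 - Complex.I * s]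

/-- `F_n(g) = ψ_v(n_ℂ(g)⁻¹) χ_n(k_ℂ(g)⁻¹)` for `g ∈ P⁺K_ℂN_ℂ`, where for
`g = [[a,b],[c,d]]` the `K_ℂ`-projection has parameter `γ = 1/(c+d)` and the
`N_ℂ`-projection has parameter `s = -ic/(c+d)`; so
`F_n(g) = e^{iv·s(g)} (c+d)^{-n}`. -/
noncomputable def Fwhit (n : ℤ) (v : ℝ) (g : Matrix (Fin 2) (Fin 2) ℂ) : ℂ :=
  Complex.exp (Complex.I * v * (-Complex.I * g 1 0 / (g 1 0 + g 1 1))) *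
    (g 1 0 + g 1 1) ^ (-n)

/-! The bottom row `(c, d)` of `k_θ a_t n_x` has `c + d = e^{-iθ/2} e^t` and
`c / (c + d) = e^{-t} sinh t + ix`, and `|F_n(g)| = e^{v Re(c/(c+d))} |c + d|^{-n}`; since
`2 e^{-t} sinh t = 1 - e^{-2t}` this is the modulus formula. Against `e^{2t} dt dθ` the integrand is
`e^v exp((2 - 2n)t - v e^{-2t})`, independent of `θ`. It is integrable at `+∞` iff `n > 1`, and at
`-∞` iff `v > 0`, where the double exponential makes it smaller than a Gaussian; in every other case
it is bounded below by a positive constant on a half-line. -/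

open Real

lemma norm_Fwhit (n : ℤ) (v : ℝ) (g : Matrix (Fin 2) (Fin 2) ℂ) :
    ‖Fwhit n v g‖ = exp (v * (g 1 0 / (g 1 0 + g 1 1)).re) * ‖g 1 0 + g 1 1‖ ^ (-n) := by
  have hexponent : Complex.I * v * (-Complex.I * g 1 0 / (g 1 0 + g 1 1))
      = v * (g 1 0 / (g 1 0 + g 1 1)) := by
    linear_combination (-(v : ℂ) * (g 1 0 / (g 1 0 + g 1 1))) * Complex.I_sq
  rw [Fwhit, norm_mul, Complex.norm_exp, norm_zpow, hexponent, Complex.re_ofReal_mul]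

lemma kθmat_mul_amat_mul_nmat_one_zero (θ t : ℝ) (s : ℂ) :
    (kθmat θ * amat t * nmat s) 1 0
      = Complex.exp (-(Complex.I * θ / 2)) * (sinh t + Complex.I * s * exp t) := by
  rw [kθmat, amat, nmat, mul_fin_two, mul_fin_two]
  simp only [of_apply, cons_val_one, cons_val_zero]
  rw [Complex.ofReal_exp, ← Complex.cosh_add_sinh (t : ℂ), Complex.ofReal_sinh, Complex.ofReal_cosh]
  ring

lemma kθmat_mul_amat_mul_nmat_one_one (θ t : ℝ) (s : ℂ) :
    (kθmat θ * amat t * nmat s) 1 1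
      = Complex.exp (-(Complex.I * θ / 2)) * (cosh t - Complex.I * s * exp t) := by
  rw [kθmat, amat, nmat, mul_fin_two, mul_fin_two]
  simp only [of_apply, cons_val_one, cons_val_zero]
  rw [Complex.ofReal_exp, ← Complex.cosh_add_sinh (t : ℂ), Complex.ofReal_sinh, Complex.ofReal_cosh]
  ring

lemma kθmat_mul_amat_mul_nmat_bottom_row_sum (θ t : ℝ) (s : ℂ) :
    (kθmat θ * amat t * nmat s) 1 0 + (kθmat θ * amat t * nmat s) 1 1
      = Complex.exp (-(Complex.I * θ / 2)) * exp t := by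
  rw [kθmat_mul_amat_mul_nmat_one_zero, kθmat_mul_amat_mul_nmat_one_one, Complex.ofReal_exp,
    ← Complex.cosh_add_sinh (t : ℂ), Complex.ofReal_sinh, Complex.ofReal_cosh]
  ring

lemma two_mul_sinh_mul_exp_neg (t : ℝ) : 2 * (sinh t * exp (-t)) = 1 - exp (-2 * t) := by
  rw [sinh_eq, show -2 * t = -t + -t by ring, exp_add]
  field_simp
  rw [mul_sub, ← exp_add, neg_add_cancel, exp_zero]
  ring

lemma norm_Fwhit_kθmat_mul_amat_mul_nmat_sq (n : ℤ) (v θ t x : ℝ) :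
    ‖Fwhit n v (kθmat θ * amat t * nmat (x : ℂ))‖ ^ 2
      = exp (-2 * n * t) * exp (v * (1 - exp (-2 * t))) := by
  have hquot : (kθmat θ * amat t * nmat (x : ℂ)) 1 0 /
      ((kθmat θ * amat t * nmat (x : ℂ)) 1 0 + (kθmat θ * amat t * nmat (x : ℂ)) 1 1)
        = (sinh t * exp (-t) : ℝ) + Complex.I * x := by
    rw [kθmat_mul_amat_mul_nmat_bottom_row_sum, kθmat_mul_amat_mul_nmat_one_zero,
      div_eq_iff (by simp [Complex.exp_ne_zero])]
    push_cast [exp_neg]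
    field_simp
  have hnorm : ‖Complex.exp (-(Complex.I * θ / 2)) * (exp t : ℂ)‖ = exp t := by
    simp [Complex.norm_exp]
  rw [norm_Fwhit, hquot, kθmat_mul_amat_mul_nmat_bottom_row_sum, hnorm, ← rpow_intCast,
    ← exp_mul, mul_pow, ← exp_nat_mul, ← exp_nat_mul, ← exp_add, ← exp_add]
  congr 1
  simp only [Complex.add_re, Complex.ofReal_re, Complex.mul_re, Complex.I_re, Complex.I_im,
    Complex.ofReal_im]
  push_cast
  linear_combination v * two_mul_sinh_mul_exp_neg t

section Integrability

open Set

lemma not_integrableOn_of_le {α : Type*} [MeasurableSpace α] {μ : Measure α} {s : Set α}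
    {f : α → ℝ} {c : ℝ} (hs : MeasurableSet s) (hμs : μ s = ⊤) (hc : 0 < c)
    (hf : ∀ x ∈ s, c ≤ f x) : ¬ IntegrableOn f s μ := by
  intro h
  have hconst : IntegrableOn (fun _ ↦ c) s μ :=
    h.mono' aestronglyMeasurable_const <| (ae_restrict_iff' hs).2 <|
      .of_forall fun x hx ↦ by rw [norm_of_nonneg hc.le]; exact hf x hx
  simp [integrableOn_const_iff, hc.ne', hμs] at hconst

lemma integrable_exp_quadratic {p : ℝ} (hp : p < 0) (q r : ℝ) :
    Integrable fun t : ℝ ↦ exp (p * t ^ 2 + q * t + r) := by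
  simpa [Complex.norm_exp, ← Complex.ofReal_pow] using
    (integrable_cexp_quadratic' (b := p) (by simpa using hp) q r).norm

variable {a b c : ℝ}

lemma integrableOn_Ioi_exp_mul_sub_mul_exp_neg (ha : a < 0) (hb : 0 ≤ b) :
    IntegrableOn (fun t ↦ exp (a * t - b * exp (-c * t))) (Ioi 0) := by
  have hmajorant : IntegrableOn (fun t ↦ exp (-(-a) * t)) (Ioi 0) :=
    exp_neg_integrableOn_Ioi 0 (neg_pos.2 ha)
  refine hmajorant.mono' (by fun_prop) (.of_forall fun t ↦ ?_)
  rw [norm_of_nonneg (exp_pos _).le, neg_neg, exp_le_exp]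
  nlinarith [exp_pos (-c * t)]

/-- On `t ≤ 0` the double exponential dominates a Gaussian, since `e^{-ct} ≥ 1 - ct + c²t²/2`. -/
lemma integrableOn_Iic_exp_mul_sub_mul_exp_neg (hb : 0 < b) (hc : 0 < c) :
    IntegrableOn (fun t ↦ exp (a * t - b * exp (-c * t))) (Iic 0) := by
  have hmajorant := integrable_exp_quadratic (p := -(b * c ^ 2 / 2))
    (by have := mul_pos hb (pow_pos hc 2); linarith) (a + b * c) (-b)
  refine hmajorant.integrableOn.mono' (by fun_prop) <| (ae_restrict_iff' measurableSet_Iic).2 <|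
    .of_forall fun t ht ↦ ?_
  have hquad := quadratic_le_exp_of_nonneg (x := -c * t) (by nlinarith [mem_Iic.1 ht])
  rw [norm_of_nonneg (exp_pos _).le, exp_le_exp]
  nlinarith [mul_le_mul_of_nonneg_left hquad hb.le]

lemma integrable_exp_mul_sub_mul_exp_neg_iff (hc : 0 < c) :
    Integrable (fun t ↦ exp (a * t - b * exp (-c * t))) ↔ a < 0 ∧ 0 < b := by
  refine ⟨fun h ↦ ?_, fun ⟨ha, hb⟩ ↦ ?_⟩
  · by_contra hab
    rcases le_or_gt b 0 with hb | hb
    · rcases le_total 0 a with ha | ha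
      · refine not_integrableOn_of_le (s := Ici 0) measurableSet_Ici volume_Ici one_pos
          (fun t ht ↦ ?_) h.integrableOn
        rw [one_le_exp_iff]
        nlinarith [exp_pos (-c * t), mem_Ici.1 ht]
      · refine not_integrableOn_of_le (s := Iic 0) measurableSet_Iic volume_Iic one_pos
          (fun t ht ↦ ?_) h.integrableOn
        rw [one_le_exp_iff]
        nlinarith [exp_pos (-c * t), mem_Iic.1 ht]
    · have ha : 0 ≤ a := le_of_not_gt fun ha ↦ hab ⟨ha, hb⟩
      refine not_integrableOn_of_le (s := Ici 0) measurableSet_Ici volume_Ici (exp_pos (-b))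
        (fun t ht ↦ ?_) h.integrableOn
      have hdecay : exp (-c * t) ≤ 1 := exp_le_one_iff.2 (by nlinarith [mem_Ici.1 ht])
      rw [exp_le_exp]
      nlinarith [mem_Ici.1 ht]
  · rw [← integrableOn_univ, ← Iic_union_Ioi (a := 0)]
    exact (integrableOn_Iic_exp_mul_sub_mul_exp_neg hb hc).union
      (integrableOn_Ioi_exp_mul_sub_mul_exp_neg ha hb.le)

end Integrability

lemma nmat_zero : nmat 0 = 1 := by
  simp [nmat, Matrix.one_fin_two]

lemma norm_Fwhit_kθmat_mul_amat_sq_mul_exp (n : ℤ) (v θ t : ℝ) :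
    ‖Fwhit n v (kθmat θ * amat t)‖ ^ 2 * exp (2 * t)
      = exp v * exp ((2 - 2 * n) * t - v * exp (-2 * t)) := by
  have h := norm_Fwhit_kθmat_mul_amat_mul_nmat_sq n v θ t 0
  rw [Complex.ofReal_zero, nmat_zero, mul_one] at h
  rw [h, ← exp_add, ← exp_add, ← exp_add]
  ring_nf

/-- `|F_n(k_θ a_t n_x)|² = e^{-2nt} e^{v(1-e^{-2t})}`, and with respect to
the invariant measure `(1/4π)∫₀^{4π}∫_ℝ (·) e^{2t} dt dθ` on `G/N`, the function `F_n`
is square-integrable iff `n > 1` and `v > 0`. -/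
theorem Fwhit_modulus_and_L2 (n : ℤ) (v : ℝ) :
    (∀ θ t x : ℝ,
      ‖Fwhit n v (kθmat θ * amat t * nmat (x : ℂ))‖ ^ 2
        = Real.exp (-2 * n * t) * Real.exp (v * (1 - Real.exp (-2 * t)))) ∧
    (IntegrableOn
        (fun p : ℝ × ℝ =>
          ‖Fwhit n v (kθmat p.1 * amat p.2)‖ ^ 2 * Real.exp (2 * p.2))
        (Set.Ioc 0 (4 * Real.pi) ×ˢ (Set.univ : Set ℝ))
      ↔ 1 < n ∧ 0 < v) := by
  refine ⟨norm_Fwhit_kθmat_mul_amat_mul_nmat_sq n v, ?_⟩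
  have hθ : volume.restrict (Set.Ioc 0 (4 * π)) ≠ 0 := by
    simp [Measure.restrict_eq_zero, pi_pos]
  simp_rw [norm_Fwhit_kθmat_mul_amat_sq_mul_exp]
  rw [IntegrableOn, Measure.volume_eq_prod, ← Measure.prod_restrict, Measure.restrict_univ,
    Integrable.comp_snd_iff (f := fun t ↦ exp v * exp ((2 - 2 * n) * t - v * exp (-2 * t))) hθ,
    integrable_const_mul_iff (exp_pos v).ne'.isUnit,
    integrable_exp_mul_sub_mul_exp_neg_iff two_pos]
  refine and_congr_left' ?_
  rw [sub_neg]
  norm_cast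
  omega
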